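/- Let ℱ be a separable family of measurable functions f : 𝒳 → ℝ with |f(x)| ≤ M for all x ∈ 𝒳, f ∈ ℱ, for some constant M < ∞. For α ∈ ℝ let 𝒞_α = {L_f(α) : f ∈ ℱ}, and suppose dim(𝒞_α) < ∞ for every α ∈ ℝ. Then for every probability measure μ on (𝒳, 𝒮) and every ε > 0, N_[](ε, ℱ, μ) < ∞. -/

import Mathlib

open MeasureTheory Set Filter

/-- `𝒞` shatters the finite set `D` if every subset of `D` is cut out by some `C ∈ 𝒞`. -/
def Shatters {X : Type*} (𝒞 : Set (Set X)) (D : Finset X) : Prop :=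
  ∀ B ⊆ D, ∃ C ∈ 𝒞, ∀ x ∈ D, x ∈ C ↔ x ∈ B

/-- `𝒞` has finite VC dimension: the cardinalities of shattered finite sets are bounded. -/
def FiniteVC {X : Type*} (𝒞 : Set (Set X)) : Prop :=
  ∃ k : ℕ, ∀ D : Finset X, Shatters 𝒞 D → D.card ≤ k

/-- `π` is a finite measurable partition of the whole space. -/
def IsFinitePartition {X : Type*} [MeasurableSpace X] (π : Set (Set X)) : Prop :=
  π.Finite ∧ (∀ A ∈ π, MeasurableSet A) ∧
    (∀ A ∈ π, ∀ B ∈ π, A ≠ B → Disjoint A B) ∧ ⋃₀ π = Set.univ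

/-- The `π`-boundary of `C`: union of the cells of `π` meeting both `C` and `Cᶜ`
with positive measure. -/
def piBoundary {X : Type*} [MeasurableSpace X] (μ : Measure X) (π : Set (Set X))
    (C : Set X) : Set X :=
  ⋃₀ {A ∈ π | 0 < μ (A ∩ C) * μ (A ∩ Cᶜ)}

/-- `𝒞` is finitely approximable w.r.t. `μ`: for every `ε > 0` there is a finite measurable
partition `π` such that `μ (∂(C : π)) ≤ ε` for every `C ∈ 𝒞`. -/
def FinitelyApproximable {X : Type*} [MeasurableSpace X] (μ : Measure X)
    (𝒞 : Set (Set X)) : Prop :=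
  ∀ ε : ENNReal, 0 < ε → ∃ π : Set (Set X), IsFinitePartition π ∧
    ∀ C ∈ 𝒞, μ (piBoundary μ π C) ≤ ε

/-- A family of sets is separable if some countable subfamily `𝒞₀ ⊆ 𝒞` is pointwise dense:
every `C ∈ 𝒞` is a pointwise limit (of indicator functions) of a sequence from `𝒞₀`. -/
def SeparableSetFamily {X : Type*} (𝒞 : Set (Set X)) : Prop :=
  ∃ 𝒞₀ ⊆ 𝒞, 𝒞₀.Countable ∧ ∀ C ∈ 𝒞, ∃ g : ℕ → Set X, (∀ n, g n ∈ 𝒞₀) ∧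
    ∀ x : X, ∀ᶠ n in Filter.atTop, (x ∈ g n ↔ x ∈ C)

/-- The family `ℱ` of real functions has finite bracketing numbers w.r.t. `μ`: for every
`ε > 0` finitely many `ε`-brackets (pairs of measurable functions `g ≤ h` with
`∫ (h - g) dμ ≤ ε`) cover `ℱ`. -/
def FiniteBracketing {X : Type*} [MeasurableSpace X] (μ : Measure X)
    (ℱ : Set (X → ℝ)) : Prop :=
  ∀ ε : ℝ, 0 < ε → ∃ n : ℕ, ∃ g h : Fin n → X → ℝ,
    (∀ i, Measurable (g i) ∧ Measurable (h i) ∧ (∀ x, g i x ≤ h i x) ∧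
      ∫⁻ x, ENNReal.ofReal (h i x - g i x) ∂μ ≤ ENNReal.ofReal ε) ∧
    ∀ f ∈ ℱ, ∃ i, ∀ x, g i x ≤ f x ∧ f x ≤ h i x

/-- A family `ℱ` of real functions is separable if some countable subfamily `ℱ₀ ⊆ ℱ` is
pointwise dense in `ℱ`. -/
def SeparableFamily {X : Type*} (ℱ : Set (X → ℝ)) : Prop :=
  ∃ ℱ₀ ⊆ ℱ, ℱ₀.Countable ∧ ∀ f ∈ ℱ, ∃ g : ℕ → (X → ℝ), (∀ n, g n ∈ ℱ₀) ∧
    ∀ x : X, Filter.Tendsto (fun n => g n x) Filter.atTop (nhds (f x))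

/-!
Fix a grid `a + j * δ` of levels. Each family of level sets, being a measurable VC class, is
finitely approximable: one finite partition makes the `π`-boundary of every level set at a given
height small. On a cell of a common refinement of these partitions, a function `f ∈ ℱ` lies
almost everywhere between two consecutive grid points unless the cell lies in the boundary of
one of the level sets of `f`, and those cells have small total measure; this gives finitely many
brackets of small width holding almost everywhere. By separability only countably many
exceptional null sets occur, so after redefining the brackets on one null set they hold
everywhere on a countable dense subfamily; a finite union of brackets is closed under pointwise
limits.

If a VC class `𝒞` were not approximable by countable partitions, exhaustion would give a set
`S₀` of positive measure no part of which is approximable. Then some part `A` of `S₀` is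
coherent: every balanced family of at most `M` disjoint pieces of `A` is split entirely by one
`C ∈ 𝒞`, for otherwise partitions shrinking the split mass by the factor `1 - 1 / (2 * M)`
could be iterated into an approximation. Splitting all atoms of `A` again and again yields
`2 ^ (d + 1)` independent sets in `𝒞`, and these shatter `d + 1` points.
-/

open scoped ENNReal Topology
open Function

lemma Finset.exists_subset_sum_mem_Icc {ι : Type*} (s : Finset ι) (f : ι → ℝ≥0∞) {b : ℝ≥0∞}
    (hf : ∀ i ∈ s, f i ≤ b) (hs : b ≤ ∑ i ∈ s, f i) :
    ∃ t ⊆ s, ∑ i ∈ t, f i ∈ Set.Icc b (2 * b) := by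
  classical
  induction s using Finset.induction_on with
  | empty => exact ⟨∅, subset_rfl, hs, by simp⟩
  | insert a s ha ih =>
    by_cases hb : b ≤ ∑ i ∈ s, f i
    · obtain ⟨t, hts, ht⟩ := ih (fun i hi => hf i (Finset.mem_insert_of_mem hi)) hb
      exact ⟨t, hts.trans (Finset.subset_insert a s), ht⟩
    · refine ⟨insert a s, subset_rfl, hs, ?_⟩
      rw [Finset.sum_insert ha, two_mul]
      exact add_le_add (hf a (Finset.mem_insert_self a s)) (not_le.1 hb).le

section SetFamilies

variable {X : Type*}

def atom (A : Set X) {ι : Type*} (Cs : ι → Set X) (s : ι → Bool) : Set X :=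
  A ∩ ⋂ i, if s i then Cs i else (Cs i)ᶜ

lemma mem_atom {A : Set X} {ι : Type*} {Cs : ι → Set X} {s : ι → Bool} {x : X} :
    x ∈ atom A Cs s ↔ x ∈ A ∧ ∀ i, (x ∈ Cs i ↔ s i = true) := by
  simp only [atom, mem_inter_iff, mem_iInter]
  refine and_congr_right' (forall_congr' fun i => ?_)
  cases s i <;> simp

lemma measurableSet_atom [MeasurableSpace X] {A : Set X} {ι : Type*} [Countable ι] {Cs : ι → Set X}
    (hA : MeasurableSet A) (hCs : ∀ i, MeasurableSet (Cs i)) (s : ι → Bool) :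
    MeasurableSet (atom A Cs s) :=
  hA.inter (.iInter fun i => by cases s i <;> simp [hCs i])

lemma pairwise_disjoint_atom (A : Set X) {ι : Type*} (Cs : ι → Set X) :
    Pairwise (Disjoint on atom A Cs) := by
  intro s t hst
  obtain ⟨i, hi⟩ := Function.ne_iff.1 hst
  refine Set.disjoint_left.2 fun x hs ht => hi ?_
  exact Bool.eq_iff_iff.2 (((mem_atom.1 hs).2 i).symm.trans ((mem_atom.1 ht).2 i))

lemma atom_snoc (A : Set X) {n : ℕ} (Cs : Fin n → Set X) (C : Set X) (s : Fin (n + 1) → Bool) :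
    atom A (Fin.snoc Cs C : Fin (n + 1) → Set X) s =
      atom A Cs (Fin.init s) ∩ if s (Fin.last n) then C else Cᶜ := by
  ext x
  simp only [atom, mem_inter_iff, mem_iInter, Fin.forall_fin_succ', Fin.snoc_castSucc,
    Fin.snoc_last, Fin.init]
  tauto

lemma exists_shatters_of_independent {α : Type*} [Fintype α] [DecidableEq α]
    {𝒞 : Set (Set X)} {Cs : Finset α → Set X} (hCs : ∀ F, Cs F ∈ 𝒞)
    (h : ∀ s : Finset α → Bool, ∃ x, ∀ F, x ∈ Cs F ↔ s F = true) :
    ∃ D : Finset X, Shatters 𝒞 D ∧ D.card = Fintype.card α := by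
  classical
  choose x hx using fun a : α => h fun F => decide (a ∈ F)
  simp only [decide_eq_true_eq] at hx
  have hinj : Injective x := fun a b hab =>
    (Finset.mem_singleton.1 ((hx b {a}).1 (hab ▸ (hx a {a}).2 (Finset.mem_singleton_self a)))).symm
  refine ⟨Finset.univ.image x, fun B _ => ⟨Cs {a | x a ∈ B}, hCs _, ?_⟩,
    by rw [Finset.card_image_of_injective _ hinj, Finset.card_univ]⟩
  intro y hy
  obtain ⟨a, -, rfl⟩ := Finset.mem_image.1 hy
  simp [hx]

noncomputable def partitionStep (P : Finset (Set X)) (v : Set X → ℝ) (x : X) : ℝ :=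
  ∑ A ∈ P, A.indicator (fun _ => v A) x

lemma partitionStep_eq {P : Finset (Set X)} (hP : (P : Set (Set X)).Pairwise Disjoint)
    (v : Set X → ℝ) {A : Set X} (hA : A ∈ P) {x : X} (hx : x ∈ A) : partitionStep P v x = v A := by
  rw [partitionStep, Finset.sum_eq_single_of_mem A hA fun B hB hBA =>
    indicator_of_notMem (Set.disjoint_left.1 (hP hA hB hBA.symm) hx) _, indicator_of_mem hx]

lemma finite_image_partitionStep (P : Finset (Set X)) {V : Set ℝ} (hV : V.Finite) :
    (partitionStep P '' {v | ∀ A ∈ P, v A ∈ V}).Finite := by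
  have := hV.to_subtype
  refine (finite_range fun w : P → V =>
    partitionStep P fun A => if h : A ∈ P then (w ⟨A, h⟩ : ℝ) else 0).subset ?_
  rintro _ ⟨v, hv, rfl⟩
  refine ⟨fun A => ⟨v A, hv A A.2⟩, funext fun x => Finset.sum_congr rfl fun A hA => ?_⟩
  simp [hA]

lemma subset_of_isClosed_of_tendsto {Y : Type*} [TopologicalSpace Y] {ℱ ℱ₀ S : Set (X → Y)}
    (hS : IsClosed S) (h₀ : ℱ₀ ⊆ S) (hdense : ∀ f ∈ ℱ, ∃ g : ℕ → X → Y, (∀ n, g n ∈ ℱ₀) ∧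
      ∀ x, Tendsto (fun n => g n x) atTop (𝓝 (f x))) :
    ℱ ⊆ S := fun f hf => by
  obtain ⟨g, hg, hlim⟩ := hdense f hf
  exact hS.mem_of_tendsto (tendsto_pi_nhds.2 hlim) (Eventually.of_forall fun n => h₀ (hg n))

end SetFamilies

section Measure

variable {X : Type*} [MeasurableSpace X] {μ : Measure X}

section Partitions

def Splits (μ : Measure X) (C A : Set X) : Prop :=
  0 < μ (A ∩ C) ∧ 0 < μ (A \ C)

lemma Splits.mono {C A B : Set X} (h : Splits μ C A) (hAB : A ⊆ B) : Splits μ C B :=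
  ⟨h.1.trans_le (measure_mono (inter_subset_inter_left C hAB)),
    h.2.trans_le (measure_mono (sdiff_subset_sdiff_left hAB))⟩

lemma piBoundary_eq_sUnion (π : Set (Set X)) (C : Set X) :
    piBoundary μ π C = ⋃₀ {A ∈ π | Splits μ C A} := by
  simp only [piBoundary, Splits, ENNReal.mul_pos_iff, sdiff_eq]

lemma subset_piBoundary {π : Set (Set X)} {A C : Set X} (hA : A ∈ π) (h : Splits μ C A) :
    A ⊆ piBoundary μ π C := by
  rw [piBoundary_eq_sUnion]
  exact subset_sUnion_of_mem ⟨hA, h⟩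

lemma piBoundary_iUnion {ι : Sort*} (𝒟 : ι → Set (Set X)) (C : Set X) :
    piBoundary μ (⋃ i, 𝒟 i) C = ⋃ i, piBoundary μ (𝒟 i) C := by
  ext x
  simp only [piBoundary, mem_sUnion, mem_ofPred_eq, mem_iUnion]
  aesop

lemma piBoundary_subset_sUnion (π : Set (Set X)) (C : Set X) : piBoundary μ π C ⊆ ⋃₀ π :=
  sUnion_mono (sep_subset _ _)

lemma piBoundary_eq_empty {π : Set (Set X)} {B C : Set X} (hπ : ∀ A ∈ π, A ⊆ B)
    (hB : ¬ Splits μ C B) : piBoundary μ π C = ∅ := by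
  rw [piBoundary_eq_sUnion, sUnion_eq_empty]
  exact fun A hA => absurd (hA.2.mono (hπ A hA.1)) hB

lemma piBoundary_mono {π π' : Set (Set X)} (h : π ⊆ π') (C : Set X) :
    piBoundary μ π C ⊆ piBoundary μ π' C :=
  sUnion_mono fun _ hA => ⟨h hA.1, hA.2⟩

lemma piBoundary_insert_subset (R : Set X) (π : Set (Set X)) (C : Set X) :
    piBoundary μ (insert R π) C ⊆ R ∪ piBoundary μ π C := by
  rintro x ⟨A, ⟨rfl | hA, hsplit⟩, hxA⟩
  · exact Or.inl hxA
  · exact Or.inr ⟨A, ⟨hA, hsplit⟩, hxA⟩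

lemma piBoundary_mono_of_refines {π π' : Set (Set X)} (h : ∀ A ∈ π, ∃ B ∈ π', A ⊆ B)
    (C : Set X) : piBoundary μ π C ⊆ piBoundary μ π' C := by
  rw [piBoundary_eq_sUnion, piBoundary_eq_sUnion]
  rintro x ⟨A, ⟨hA, hsplit⟩, hx⟩
  obtain ⟨B, hB, hAB⟩ := h A hA
  exact ⟨B, ⟨hB, hsplit.mono hAB⟩, hAB hx⟩

structure IsAEPartition (μ : Measure X) (S : Set X) (𝒟 : Set (Set X)) : Prop where
  countable : 𝒟.Countable
  measurableSet : ∀ A ∈ 𝒟, MeasurableSet A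
  subset : ∀ A ∈ 𝒟, A ⊆ S
  pairwise_disjoint : 𝒟.Pairwise Disjoint
  measure_diff_sUnion : μ (S \ ⋃₀ 𝒟) = 0

lemma IsAEPartition.singleton {S : Set X} (hS : MeasurableSet S) : IsAEPartition μ S {S} where
  countable := countable_singleton S
  measurableSet := by simpa using hS
  subset := by simp
  pairwise_disjoint := pairwise_singleton S _
  measure_diff_sUnion := by simp

lemma IsAEPartition.iUnion {S : Set X} {ℰ : Set (Set X)} (hℰ : IsAEPartition μ S ℰ)
    {𝒟 : ℰ → Set (Set X)} (h𝒟 : ∀ E : ℰ, IsAEPartition μ E (𝒟 E)) :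
    IsAEPartition μ S (⋃ E, 𝒟 E) where
  countable := by
    have := hℰ.countable.to_subtype
    exact countable_iUnion fun E => (h𝒟 E).countable
  measurableSet A hA := by
    obtain ⟨E, hE⟩ := mem_iUnion.1 hA
    exact (h𝒟 E).measurableSet A hE
  subset A hA := by
    obtain ⟨E, hE⟩ := mem_iUnion.1 hA
    exact ((h𝒟 E).subset A hE).trans (hℰ.subset E E.2)
  pairwise_disjoint A hA B hB hAB := by
    obtain ⟨E, hAE⟩ := mem_iUnion.1 hA
    obtain ⟨F, hBF⟩ := mem_iUnion.1 hB
    by_cases hEF : E = F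
    · subst hEF
      exact (h𝒟 E).pairwise_disjoint hAE hBF hAB
    · exact (hℰ.pairwise_disjoint E.2 F.2 (Subtype.coe_injective.ne hEF)).mono
        ((h𝒟 E).subset A hAE) ((h𝒟 F).subset B hBF)
  measure_diff_sUnion := by
    have := hℰ.countable.to_subtype
    refine measure_mono_null (t := (S \ ⋃₀ ℰ) ∪ ⋃ E : ℰ, (E.1 \ ⋃₀ 𝒟 E)) ?_
      (measure_union_null hℰ.measure_diff_sUnion
        (measure_iUnion_null fun E => (h𝒟 E).measure_diff_sUnion))
    rintro x ⟨hxS, hx⟩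
    by_cases hxℰ : x ∈ ⋃₀ ℰ
    · obtain ⟨E, hE, hxE⟩ := hxℰ
      refine Or.inr (mem_iUnion.2 ⟨⟨E, hE⟩, hxE, fun ⟨A, hA, hxA⟩ => hx ?_⟩)
      exact ⟨A, mem_iUnion.2 ⟨⟨E, hE⟩, hA⟩, hxA⟩
    · exact Or.inl ⟨hxS, hxℰ⟩

lemma IsAEPartition.exists_measure_inter_pos {S T : Set X} {𝒟 : Set (Set X)}
    (h𝒟 : IsAEPartition μ S 𝒟) (hTS : T ⊆ S) (hTpos : 0 < μ T) : ∃ A ∈ 𝒟, 0 < μ (T ∩ A) := by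
  by_contra! hnull
  refine hTpos.ne' (measure_mono_null (t := (S \ ⋃₀ 𝒟) ∪ ⋃ A ∈ 𝒟, T ∩ A) ?_
    (measure_union_null h𝒟.measure_diff_sUnion ((measure_biUnion_null_iff h𝒟.countable).2
      fun A hA => nonpos_iff_eq_zero.1 (hnull A hA))))
  intro x hx
  by_cases hx𝒟 : x ∈ ⋃₀ 𝒟
  · obtain ⟨A, hA, hxA⟩ := hx𝒟
    exact Or.inr (mem_biUnion hA ⟨hx, hxA⟩)
  · exact Or.inl ⟨hTS hx, hx𝒟⟩

theorem exists_isAEPartition_forall_of_dense [SFinite μ] {S : Set X} (hS : MeasurableSet S)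
    (P : Set X → Prop)
    (hP : ∀ T ⊆ S, MeasurableSet T → 0 < μ T → ∃ E ⊆ T, MeasurableSet E ∧ 0 < μ E ∧ P E) :
    ∃ ℰ, IsAEPartition μ S ℰ ∧ ∀ E ∈ ℰ, P E := by
  let good := {E | E ⊆ S ∧ MeasurableSet E ∧ 0 < μ E ∧ P E}
  obtain ⟨ℰ, ⟨hgood, hdisj⟩, hmax⟩ := zorn_subset {ℰ | ℰ ⊆ good ∧ ℰ.Pairwise Disjoint}
    fun c hc hchain => ⟨⋃₀ c, ⟨sUnion_subset fun ℰ hℰ => (hc hℰ).1,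
      hchain.pairwise_sUnion.2 fun ℰ hℰ => (hc hℰ).2⟩, fun _ => subset_sUnion_of_mem⟩
  have hcount : ℰ.Countable := by
    have h := Measure.countable_meas_pos_of_disjoint_iUnion (μ := μ) (As := ((↑) : ℰ → Set X))
      (fun E => (hgood E.2).2.1) fun E F hEF => hdisj E.2 F.2 (Subtype.coe_injective.ne hEF)
    rw [show {E : ℰ | 0 < μ E} = univ from eq_univ_of_forall fun E => (hgood E.2).2.2.1,
      countable_univ_iff] at h
    exact countable_coe_iff.1 h
  have hmeas : MeasurableSet (⋃₀ ℰ) := .sUnion hcount fun E hE => (hgood hE).2.1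
  refine ⟨ℰ, ⟨hcount, fun E hE => (hgood hE).2.1, fun E hE => (hgood hE).1, hdisj, ?_⟩,
    fun E hE => (hgood hE).2.2.2⟩
  by_contra hpos
  obtain ⟨E, hE, hEm, hEpos, hPE⟩ := hP _ sdiff_subset (hS.diff hmeas) (pos_iff_ne_zero.2 hpos)
  have hdisjE : ∀ F ∈ ℰ, Disjoint E F := fun F hF =>
    (disjoint_sdiff_left.mono_right (subset_sUnion_of_mem hF)).mono_left hE
  have hEℰ : E ∈ ℰ := hmax ⟨insert_subset ⟨hE.trans sdiff_subset, hEm, hEpos, hPE⟩ hgood,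
    hdisj.insert fun F hF _ => ⟨hdisjE F hF, (hdisjE F hF).symm⟩⟩ (subset_insert _ _)
    (mem_insert _ _)
  exact hEpos.ne' (by rw [disjoint_self.1 (hdisjE E hEℰ)]; exact measure_empty)

end Partitions

section Approximation

variable {𝒞 : Set (Set X)} {S : Set X}

def ApproxOn (μ : Measure X) (𝒞 : Set (Set X)) (S : Set X) : Prop :=
  ∀ ε : ℝ≥0∞, 0 < ε → ∃ 𝒟, IsAEPartition μ S 𝒟 ∧ ∀ C ∈ 𝒞, μ (piBoundary μ 𝒟 C) ≤ ε

lemma approxOn_of_forall_not_splits (hS : MeasurableSet S) (h : ∀ C ∈ 𝒞, ¬ Splits μ C S) :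
    ApproxOn μ 𝒞 S := fun _ _ =>
  ⟨{S}, .singleton hS, fun C hC => by
    rw [piBoundary_eq_empty (fun A hA => (mem_singleton_iff.1 hA).le) (h C hC), measure_empty]
    exact zero_le⟩

lemma approxOn_of_forall_exists_subset [SFinite μ] (hS : MeasurableSet S)
    (h : ∀ T ⊆ S, MeasurableSet T → 0 < μ T →
      ∃ E ⊆ T, MeasurableSet E ∧ 0 < μ E ∧ ApproxOn μ 𝒞 E) :
    ApproxOn μ 𝒞 S := by
  intro ε hε
  obtain ⟨ℰ, hℰ, happrox⟩ := exists_isAEPartition_forall_of_dense hS _ h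
  have := hℰ.countable.to_subtype
  obtain ⟨δ, hδ, hδε⟩ := ENNReal.exists_pos_sum_of_countable hε.ne' ℰ
  choose 𝒟 h𝒟 hbound using fun E : ℰ => happrox E E.2 (δ E) (ENNReal.coe_pos.2 (hδ E))
  refine ⟨⋃ E, 𝒟 E, hℰ.iUnion h𝒟, fun C hC => ?_⟩
  calc μ (piBoundary μ (⋃ E, 𝒟 E) C)
      ≤ ∑' E, μ (piBoundary μ (𝒟 E) C) := by
        rw [piBoundary_iUnion]; exact measure_iUnion_le _
    _ ≤ ∑' E, (δ E : ℝ≥0∞) := ENNReal.tsum_le_tsum fun E => hbound E C hC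
    _ ≤ ε := hδε.le

def HasContractingPartition (μ : Measure X) (𝒞 : Set (Set X)) (θ : ℝ≥0∞) (E : Set X) : Prop :=
  ∃ 𝒟, IsAEPartition μ E 𝒟 ∧ ∀ C ∈ 𝒞, μ (piBoundary μ 𝒟 C) ≤ θ * μ E

lemma exists_isAEPartition_piBoundary_le_mul [SFinite μ] {θ : ℝ≥0∞} (hS : MeasurableSet S)
    (h : ∀ T ⊆ S, MeasurableSet T → 0 < μ T →
      ∃ E ⊆ T, MeasurableSet E ∧ 0 < μ E ∧ HasContractingPartition μ 𝒞 θ E)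
    {𝒟 : Set (Set X)} (h𝒟 : IsAEPartition μ S 𝒟) :
    ∃ 𝒟', IsAEPartition μ S 𝒟' ∧
      ∀ C ∈ 𝒞, μ (piBoundary μ 𝒟' C) ≤ θ * μ (piBoundary μ 𝒟 C) := by
  have hcell : ∀ T ⊆ S, MeasurableSet T → 0 < μ T → ∃ E ⊆ T, MeasurableSet E ∧ 0 < μ E ∧
      (∃ A ∈ 𝒟, E ⊆ A) ∧ HasContractingPartition μ 𝒞 θ E := by
    intro T hTS hT hTpos
    obtain ⟨A, hA, hTA⟩ := h𝒟.exists_measure_inter_pos hTS hTpos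
    obtain ⟨E, hE, hEm, hEpos, hEc⟩ :=
      h (T ∩ A) (inter_subset_left.trans hTS) (hT.inter (h𝒟.measurableSet A hA)) hTA
    exact ⟨E, hE.trans inter_subset_left, hEm, hEpos, ⟨A, hA, hE.trans inter_subset_right⟩, hEc⟩
  obtain ⟨ℰ, hℰ, hprop⟩ := exists_isAEPartition_forall_of_dense hS _ hcell
  have := hℰ.countable.to_subtype
  choose hsub hcontr using fun E : ℰ => hprop E E.2
  choose A hA hEA using hsub
  choose 𝒟' h𝒟' hbound using hcontr
  refine ⟨⋃ E, 𝒟' E, hℰ.iUnion h𝒟', fun C hC => ?_⟩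
  set B := piBoundary μ 𝒟 C
  have hcell_le : ∀ E : ℰ, μ (piBoundary μ (𝒟' E) C) ≤ θ * μ.restrict B E := by
    intro E
    by_cases hsplit : Splits μ C (A E)
    · have hEB : E.1 ⊆ B := (hEA E).trans (subset_piBoundary (hA E) hsplit)
      rw [Measure.restrict_apply (hℰ.measurableSet E E.2), inter_eq_left.2 hEB]
      exact hbound E C hC
    · rw [piBoundary_eq_empty (fun D hD => ((h𝒟' E).subset D hD).trans (hEA E)) hsplit,
        measure_empty]
      exact zero_le
  calc μ (piBoundary μ (⋃ E, 𝒟' E) C)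
      ≤ ∑' E, μ (piBoundary μ (𝒟' E) C) := by
        rw [piBoundary_iUnion]; exact measure_iUnion_le _
    _ ≤ ∑' E : ℰ, θ * μ.restrict B E := ENNReal.tsum_le_tsum hcell_le
    _ = θ * μ.restrict B (⋃ E : ℰ, E) := by
        rw [ENNReal.tsum_mul_left, measure_iUnion (fun E F hEF => hℰ.pairwise_disjoint E.2 F.2
          (Subtype.coe_injective.ne hEF)) fun E => hℰ.measurableSet E E.2]
    _ ≤ θ * μ B :=
        mul_le_mul_right ((measure_mono (subset_univ _)).trans_eq (Measure.restrict_apply_univ B)) θ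

lemma approxOn_of_forall_exists_contracting [IsFiniteMeasure μ] {θ : ℝ≥0∞} (hθ : θ < 1)
    (hS : MeasurableSet S)
    (h : ∀ T ⊆ S, MeasurableSet T → 0 < μ T →
      ∃ E ⊆ T, MeasurableSet E ∧ 0 < μ E ∧ HasContractingPartition μ 𝒞 θ E) :
    ApproxOn μ 𝒞 S := by
  have hiter : ∀ k : ℕ, ∃ 𝒟, IsAEPartition μ S 𝒟 ∧
      ∀ C ∈ 𝒞, μ (piBoundary μ 𝒟 C) ≤ θ ^ k * μ S := by
    intro k
    induction k with
    | zero =>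
      refine ⟨{S}, .singleton hS, fun C _ => ?_⟩
      rw [pow_zero, one_mul]
      exact measure_mono ((piBoundary_subset_sUnion _ C).trans_eq (sUnion_singleton S))
    | succ k ih =>
      obtain ⟨𝒟, h𝒟, hbound⟩ := ih
      obtain ⟨𝒟', h𝒟', hbound'⟩ := exists_isAEPartition_piBoundary_le_mul hS h h𝒟
      refine ⟨𝒟', h𝒟', fun C hC => (hbound' C hC).trans ?_⟩
      rw [pow_succ', mul_assoc]
      gcongr
      exact hbound C hC
  intro ε hε
  have hlim : Tendsto (fun k => θ ^ k * μ S) atTop (𝓝 0) := by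
    simpa using ENNReal.Tendsto.mul_const (ENNReal.tendsto_pow_atTop_nhds_zero_of_lt_one hθ)
      (Or.inr (measure_ne_top μ S))
  obtain ⟨k, hk⟩ := (hlim.eventually (gt_mem_nhds hε)).exists
  obtain ⟨𝒟, h𝒟, hbound⟩ := hiter k
  exact ⟨𝒟, h𝒟, fun C hC => (hbound C hC).trans hk.le⟩

lemma IsAEPartition.exists_finset_measure_compl_le [IsFiniteMeasure μ] {𝒟 : Set (Set X)}
    (h𝒟 : IsAEPartition μ univ 𝒟) {ε : ℝ≥0∞} (hε : 0 < ε) :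
    ∃ G : Finset (Set X), ↑G ⊆ 𝒟 ∧ μ (⋃ A ∈ G, A)ᶜ ≤ ε := by
  have := h𝒟.countable.to_subtype
  have hsum : ∑' A : 𝒟, μ A ≠ ∞ := by
    rw [← measure_sUnion h𝒟.countable h𝒟.pairwise_disjoint h𝒟.measurableSet]
    exact measure_ne_top μ _
  obtain ⟨F, hF⟩ := ((ENNReal.tendsto_tsum_compl_atTop_zero hsum).eventually
    (ge_mem_nhds hε)).exists
  refine ⟨F.map (Embedding.subtype _), fun A hA => ?_, ?_⟩
  · obtain ⟨B, -, rfl⟩ := Finset.mem_map.1 hA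
    exact B.2
  refine (measure_mono (t := (univ \ ⋃₀ 𝒟) ∪ ⋃ A : {A : 𝒟 // A ∉ F}, A.1.1) ?_).trans ?_
  · intro x hx
    by_cases hx𝒟 : x ∈ ⋃₀ 𝒟
    · obtain ⟨A, hA, hxA⟩ := hx𝒟
      refine Or.inr (mem_iUnion.2 ⟨⟨⟨A, hA⟩, fun hAF => hx ?_⟩, hxA⟩)
      exact mem_biUnion (Finset.mem_map_of_mem _ hAF) hxA
    · exact Or.inl ⟨trivial, hx𝒟⟩
  · refine (measure_union_le _ _).trans ?_
    rw [h𝒟.measure_diff_sUnion, zero_add]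
    exact (measure_iUnion_le _).trans hF

lemma isFinitePartition_insert_compl {G : Finset (Set X)} (hm : ∀ A ∈ G, MeasurableSet A)
    (hd : (G : Set (Set X)).Pairwise Disjoint) :
    IsFinitePartition (insert (⋃ A ∈ G, A)ᶜ (G : Set (Set X))) := by
  have hRG : ∀ A ∈ G, Disjoint (⋃ A ∈ G, A)ᶜ A := fun A hA =>
    disjoint_compl_left.mono_right (subset_biUnion_of_mem (u := id) hA)
  refine ⟨G.finite_toSet.insert _, ?_, ?_, ?_⟩
  · rintro A (rfl | hA)
    exacts [(G.measurableSet_biUnion hm).compl, hm A hA]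
  · rintro A (rfl | hA) B (rfl | hB) hAB
    · exact absurd rfl hAB
    · exact hRG B hB
    · exact (hRG A hA).symm
    · exact hd hA hB hAB
  · refine eq_univ_of_forall fun x => ?_
    by_cases hx : x ∈ ⋃ A ∈ G, A
    · obtain ⟨A, hA, hxA⟩ := mem_iUnion₂.1 hx
      exact ⟨A, mem_insert_of_mem _ hA, hxA⟩
    · exact ⟨_, mem_insert _ _, hx⟩

lemma finitelyApproximable_of_approxOn_univ [IsFiniteMeasure μ] (h : ApproxOn μ 𝒞 univ) :
    FinitelyApproximable μ 𝒞 := by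
  intro ε hε
  obtain ⟨𝒟, h𝒟, hbound⟩ := h (ε / 2) (ENNReal.half_pos hε.ne')
  obtain ⟨G, hG𝒟, hR⟩ := h𝒟.exists_finset_measure_compl_le (ENNReal.half_pos hε.ne')
  refine ⟨_, isFinitePartition_insert_compl (fun A hA => h𝒟.measurableSet A (hG𝒟 hA))
    (h𝒟.pairwise_disjoint.mono hG𝒟), fun C hC => ?_⟩
  calc μ (piBoundary μ (insert (⋃ A ∈ G, A)ᶜ G) C)
      ≤ μ ((⋃ A ∈ G, A)ᶜ ∪ piBoundary μ 𝒟 C) :=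
        measure_mono ((piBoundary_insert_subset _ _ _).trans
          (union_subset_union_right _ (piBoundary_mono hG𝒟 C)))
    _ ≤ ε / 2 + ε / 2 := (measure_union_le _ _).trans (add_le_add hR (hbound C hC))
    _ = ε := ENNReal.add_halves ε

end Approximation

section Nowhere

variable {𝒞 : Set (Set X)} {S₀ T : Set X}

def NowhereApproxOn (μ : Measure X) (𝒞 : Set (Set X)) (S : Set X) : Prop :=
  ∀ T ⊆ S, MeasurableSet T → 0 < μ T → ¬ ApproxOn μ 𝒞 T

lemma exists_nowhereApproxOn_of_not_approxOn [SFinite μ] (h : ¬ ApproxOn μ 𝒞 univ) :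
    ∃ S, MeasurableSet S ∧ 0 < μ S ∧ NowhereApproxOn μ 𝒞 S := by
  by_contra! hall
  refine h (approxOn_of_forall_exists_subset .univ fun T _ hT hTpos => ?_)
  by_contra! hno
  exact hall T hT hTpos hno

namespace NowhereApproxOn

variable (h : NowhereApproxOn μ 𝒞 S₀) (hm : ∀ C ∈ 𝒞, MeasurableSet C)
include h

lemma exists_splits (hTS : T ⊆ S₀) (hT : MeasurableSet T) (hTpos : 0 < μ T) :
    ∃ C ∈ 𝒞, Splits μ C T := by
  by_contra! hno
  exact h T hTS hT hTpos (approxOn_of_forall_not_splits hT hno)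

include hm

lemma exists_subset_measure_le_half (hTS : T ⊆ S₀) (hT : MeasurableSet T) (hTpos : 0 < μ T) :
    ∃ E ⊆ T, MeasurableSet E ∧ 0 < μ E ∧ μ E ≤ μ T / 2 := by
  obtain ⟨C, hC, hsplit⟩ := h.exists_splits hTS hT hTpos
  have hadd : μ (T ∩ C) + μ (T \ C) = μ T := measure_inter_add_sdiff T (hm C hC)
  have hhalf : ∀ a, a + a ≤ μ T → a ≤ μ T / 2 := fun a ha => by
    rwa [ENNReal.le_div_iff_mul_le (Or.inl two_ne_zero) (Or.inl ENNReal.ofNat_ne_top), mul_two]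
  rcases le_total (μ (T ∩ C)) (μ (T \ C)) with hle | hle
  · exact ⟨T ∩ C, inter_subset_left, hT.inter (hm C hC), hsplit.1,
      hhalf _ (hadd ▸ add_le_add le_rfl hle)⟩
  · exact ⟨T \ C, sdiff_subset, hT.diff (hm C hC), hsplit.2,
      hhalf _ (hadd ▸ add_le_add hle le_rfl)⟩

lemma exists_subset_measure_le [IsFiniteMeasure μ] (hTS : T ⊆ S₀) (hT : MeasurableSet T)
    (hTpos : 0 < μ T) {η : ℝ≥0∞} (hη : η ≠ 0) :
    ∃ E ⊆ T, MeasurableSet E ∧ 0 < μ E ∧ μ E ≤ η := by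
  have hiter : ∀ n : ℕ, ∃ E ⊆ T, MeasurableSet E ∧ 0 < μ E ∧ μ E ≤ 2⁻¹ ^ n * μ T := by
    intro n
    induction n with
    | zero => exact ⟨T, subset_rfl, hT, hTpos, by simp⟩
    | succ n ih =>
      obtain ⟨E, hET, hE, hEpos, hEle⟩ := ih
      obtain ⟨F, hFE, hF, hFpos, hFle⟩ :=
        h.exists_subset_measure_le_half hm (hET.trans hTS) hE hEpos
      refine ⟨F, hFE.trans hET, hF, hFpos, ?_⟩
      calc μ F ≤ μ E / 2 := hFle
        _ ≤ 2⁻¹ ^ n * μ T / 2 := by gcongr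
        _ = 2⁻¹ ^ (n + 1) * μ T := by rw [ENNReal.div_eq_inv_mul, pow_succ]; ring
  obtain ⟨n, hn⟩ := ENNReal.exists_inv_two_pow_lt (ENNReal.div_pos hη (measure_ne_top μ T)).ne'
  obtain ⟨E, hET, hE, hEpos, hEle⟩ := hiter n
  refine ⟨E, hET, hE, hEpos, ?_⟩
  calc μ E ≤ 2⁻¹ ^ n * μ T := hEle
    _ ≤ η / μ T * μ T := by gcongr
    _ = η := ENNReal.div_mul_cancel hTpos.ne' (measure_ne_top μ T)

lemma exists_subset_measure_mem_Icc [IsFiniteMeasure μ] (hTS : T ⊆ S₀) (hT : MeasurableSet T)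
    {c : ℝ≥0∞} (hc : c ≠ 0) (hcT : c ≤ μ T) :
    ∃ E ⊆ T, MeasurableSet E ∧ μ E ∈ Icc (c / 2) c := by
  obtain ⟨ℰ, hℰ, hsmall⟩ := exists_isAEPartition_forall_of_dense hT (fun E => μ E ≤ c / 2)
    fun T' hT'T hT' hT'pos =>
      h.exists_subset_measure_le hm (hT'T.trans hTS) hT' hT'pos (ENNReal.half_pos hc).ne'
  have hsum : c / 2 < ∑' E : ℰ, μ E := by
    rw [← measure_sUnion hℰ.countable hℰ.pairwise_disjoint hℰ.measurableSet]
    calc c / 2 < c := ENNReal.half_lt_self hc (ne_top_of_le_ne_top (measure_ne_top μ T) hcT)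
      _ ≤ μ T := hcT
      _ ≤ μ (⋃₀ ℰ) := measure_mono_ae (ae_le_set.2 hℰ.measure_diff_sUnion)
  rw [ENNReal.tsum_eq_iSup_sum] at hsum
  obtain ⟨s, hs⟩ := lt_iSup_iff.1 hsum
  obtain ⟨t, -, ht⟩ := s.exists_subset_sum_mem_Icc (fun E : ℰ => μ E)
    (fun E _ => hsmall E E.2) hs.le
  have hμ : μ (⋃ E ∈ t, E.1) = ∑ E ∈ t, μ E :=
    measure_biUnion_finset (fun E _ F _ hEF => hℰ.pairwise_disjoint E.2 F.2
      (Subtype.coe_injective.ne hEF)) fun E _ => hℰ.measurableSet E E.2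
  refine ⟨⋃ E ∈ t, E.1, iUnion₂_subset fun E _ => hℰ.subset E E.2,
    t.measurableSet_biUnion fun E _ => hℰ.measurableSet E E.2, ?_⟩
  rw [ENNReal.mul_div_cancel two_ne_zero ENNReal.ofNat_ne_top] at ht
  rwa [hμ]

end NowhereApproxOn

end Nowhere

section Coherence

variable {𝒞 : Set (Set X)} {S₀ : Set X}

lemma hasContractingPartition_iUnion [IsFiniteMeasure μ] {ι : Type*} [Fintype ι]
    [Nonempty ι] {M : ℕ} (hcard : Fintype.card ι ≤ M) {D : ι → Set X}
    (hD : ∀ i, MeasurableSet (D i)) (hdisj : Pairwise (Disjoint on D))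
    (hbal : ∀ i j, μ (D i) ≤ 2 * μ (D j)) (hno : ∀ C ∈ 𝒞, ∃ i, ¬ Splits μ C (D i)) :
    HasContractingPartition μ 𝒞 (1 - (2 * M : ℝ≥0∞)⁻¹) (⋃ i, D i) := by
  refine ⟨range D, ⟨countable_range D, forall_mem_range.2 hD,
    forall_mem_range.2 (subset_iUnion D), ?_, by simp⟩, fun C hC => ?_⟩
  · rintro _ ⟨i, rfl⟩ _ ⟨j, rfl⟩ hij
    exact hdisj (ne_of_apply_ne D hij)
  obtain ⟨i₀, hi₀⟩ := hno C hC
  have hM : (2 * M : ℝ≥0∞) ≠ 0 := by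
    have : 0 < M := Fintype.card_pos.trans_le hcard
    positivity
  have hmass : (2 * M : ℝ≥0∞)⁻¹ * μ (⋃ i, D i) ≤ μ (D i₀) := by
    rw [ENNReal.inv_mul_le_iff hM (by finiteness)]
    calc μ (⋃ i, D i) ≤ ∑ i, μ (D i) := measure_iUnion_fintype_le μ D
      _ ≤ ∑ _i : ι, 2 * μ (D i₀) := Finset.sum_le_sum fun i _ => hbal i i₀
      _ = Fintype.card ι * (2 * μ (D i₀)) := by simp
      _ ≤ M * (2 * μ (D i₀)) := by gcongr
      _ = 2 * M * μ (D i₀) := by ring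
  have hsub : piBoundary μ (range D) C ⊆ (⋃ i, D i) \ D i₀ := by
    rw [piBoundary_eq_sUnion]
    rintro x ⟨_, ⟨⟨i, rfl⟩, hsplit⟩, hx⟩
    have hi : i ≠ i₀ := by rintro rfl; exact hi₀ hsplit
    exact ⟨mem_iUnion.2 ⟨i, hx⟩, Set.disjoint_left.1 (hdisj hi) hx⟩
  calc μ (piBoundary μ (range D) C) ≤ μ ((⋃ i, D i) \ D i₀) := measure_mono hsub
    _ = μ (⋃ i, D i) - μ (D i₀) :=
        measure_sdiff (subset_iUnion D i₀) (hD i₀).nullMeasurableSet (measure_ne_top μ _)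
    _ ≤ μ (⋃ i, D i) - (2 * M : ℝ≥0∞)⁻¹ * μ (⋃ i, D i) := tsub_le_tsub_left hmass _
    _ = (1 - (2 * M : ℝ≥0∞)⁻¹) * μ (⋃ i, D i) := by
        rw [ENNReal.sub_mul fun _ _ => measure_ne_top μ _, one_mul]

def IsCoherent (μ : Measure X) (𝒞 : Set (Set X)) (M : ℕ) (A : Set X) : Prop :=
  ∀ (ι : Type) [Fintype ι] [Nonempty ι] (D : ι → Set X), Fintype.card ι ≤ M →
    (∀ i, MeasurableSet (D i)) → (∀ i, D i ⊆ A) → Pairwise (Disjoint on D) →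
    (∀ i, 0 < μ (D i)) → ∃ C ∈ 𝒞, ∀ i, Splits μ C (D i)

namespace NowhereApproxOn

variable [IsFiniteMeasure μ] (h : NowhereApproxOn μ 𝒞 S₀) (hS₀ : MeasurableSet S₀)
  (hS₀pos : 0 < μ S₀)
include h hS₀ hS₀pos

/-- Otherwise every part of `S₀` contains the union of a balanced family that no `C ∈ 𝒞` splits
entirely; such a union has a contracting partition, and iterating the contraction would
approximate `𝒞` on `S₀`. -/
lemma exists_balanced_coherent (M : ℕ) :
    ∃ A ⊆ S₀, MeasurableSet A ∧ 0 < μ A ∧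
      ∀ (ι : Type) [Fintype ι] [Nonempty ι] (D : ι → Set X), Fintype.card ι ≤ M →
        (∀ i, MeasurableSet (D i)) → (∀ i, D i ⊆ A) → Pairwise (Disjoint on D) →
        (∀ i, 0 < μ (D i)) → (∀ i j, μ (D i) ≤ 2 * μ (D j)) → ∃ C ∈ 𝒞, ∀ i, Splits μ C (D i) := by
  by_contra! hbad
  have hθ : 1 - (2 * M : ℝ≥0∞)⁻¹ < 1 :=
    ENNReal.sub_lt_self ENNReal.one_ne_top one_ne_zero (ENNReal.inv_ne_zero.2 (by finiteness))
  refine h S₀ subset_rfl hS₀ hS₀pos (approxOn_of_forall_exists_contracting hθ hS₀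
    fun A hA hAm hApos => ?_)
  obtain ⟨ι, _, _, D, hcard, hD, hDA, hdisj, hpos, hbal, hno⟩ := hbad A hA hAm hApos
  exact ⟨⋃ i, D i, iUnion_subset hDA, .iUnion hD,
    (hpos (Classical.arbitrary ι)).trans_le (measure_mono (subset_iUnion D _)),
    hasContractingPartition_iUnion hcard hD hdisj hbal hno⟩

lemma exists_isCoherent (hm : ∀ C ∈ 𝒞, MeasurableSet C) (M : ℕ) :
    ∃ A, MeasurableSet A ∧ 0 < μ A ∧ IsCoherent μ 𝒞 M A := by
  obtain ⟨A, hAS, hA, hApos, hcoh⟩ := h.exists_balanced_coherent hS₀ hS₀pos M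
  refine ⟨A, hA, hApos, fun ι _ _ D hcard hD hDA hdisj hpos => ?_⟩
  obtain ⟨i₀, -, hi₀⟩ := Finset.univ.exists_min_image (fun i => μ (D i)) Finset.univ_nonempty
  have hc : μ (D i₀) / 2 ≠ 0 := (ENNReal.half_pos (hpos i₀).ne').ne'
  choose E hED hE hEμ using fun i => h.exists_subset_measure_mem_Icc hm ((hDA i).trans hAS)
    (hD i) hc (ENNReal.half_le_self.trans (hi₀ i (Finset.mem_univ i)))
  have hbal : ∀ i j, μ (E i) ≤ 2 * μ (E j) := fun i j =>
    calc μ (E i) ≤ μ (D i₀) / 2 := (hEμ i).2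
      _ = 2 * (μ (D i₀) / 2 / 2) := (ENNReal.mul_div_cancel two_ne_zero ENNReal.ofNat_ne_top).symm
      _ ≤ 2 * μ (E j) := by gcongr; exact (hEμ j).1
  obtain ⟨C, hC, hsplit⟩ := hcoh ι E hcard hE (fun i => (hED i).trans (hDA i))
    (fun i j hij => (hdisj hij).mono (hED i) (hED j))
    (fun i => (ENNReal.half_pos hc).trans_le (hEμ i).1) hbal
  exact ⟨C, hC, fun i => (hsplit i).mono (hED i)⟩

end NowhereApproxOn

end Coherence

section Independence

variable {𝒞 : Set (Set X)}

lemma IsCoherent.exists_atom_pos {A : Set X} {M : ℕ} (hcoh : IsCoherent μ 𝒞 M A)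
    (hm : ∀ C ∈ 𝒞, MeasurableSet C) (hA : MeasurableSet A) (hApos : 0 < μ A) :
    ∀ K, 2 ^ K ≤ M → ∃ Cs : Fin K → Set X, (∀ i, Cs i ∈ 𝒞) ∧ ∀ s, 0 < μ (atom A Cs s) := by
  intro K
  induction K with
  | zero => exact fun _ => ⟨Fin.elim0, fun i => i.elim0, fun s => by simpa [atom] using hApos⟩
  | succ K ih =>
    intro hK
    obtain ⟨Cs, hCs, hpos⟩ := ih ((Nat.pow_le_pow_right two_pos K.le_succ).trans hK)
    obtain ⟨C, hC, hsplit⟩ := hcoh (Fin K → Bool) (atom A Cs)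
      (by simpa using (Nat.pow_le_pow_right two_pos K.le_succ).trans hK)
      (measurableSet_atom hA fun i => hm _ (hCs i)) (fun _ => inter_subset_left)
      (pairwise_disjoint_atom A Cs) hpos
    refine ⟨Fin.snoc Cs C, Fin.lastCases (by simpa using hC) (fun i => by simpa using hCs i),
      fun s => ?_⟩
    rw [atom_snoc]
    cases s (Fin.last K)
    · simpa [sdiff_eq] using (hsplit (Fin.init s)).2
    · simpa using (hsplit (Fin.init s)).1

theorem FiniteVC.finitelyApproximable [IsFiniteMeasure μ] (hm : ∀ C ∈ 𝒞, MeasurableSet C)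
    (hvc : FiniteVC 𝒞) : FinitelyApproximable μ 𝒞 := by
  refine finitelyApproximable_of_approxOn_univ (by_contra fun hnot => ?_)
  obtain ⟨S₀, hS₀, hS₀pos, hnowhere⟩ := exists_nowhereApproxOn_of_not_approxOn hnot
  obtain ⟨d, hd⟩ := hvc
  obtain ⟨A, hA, hApos, hcoh⟩ := hnowhere.exists_isCoherent hS₀ hS₀pos hm (2 ^ 2 ^ (d + 1))
  obtain ⟨Cs, hCs, hpos⟩ := hcoh.exists_atom_pos hm hA hApos _ le_rfl
  let e : Finset (Fin (d + 1)) ≃ Fin (2 ^ (d + 1)) := Fintype.equivFinOfCardEq (by simp)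
  obtain ⟨D, hD, hcard⟩ := exists_shatters_of_independent (Cs := Cs ∘ e) (fun F => hCs (e F))
    fun s => by
      obtain ⟨x, hx⟩ := nonempty_of_measure_ne_zero (hpos (s ∘ e.symm)).ne'
      exact ⟨x, fun F => by simpa using (mem_atom.1 hx).2 (e F)⟩
  have := hd D hD
  simp only [Fintype.card_fin] at hcard
  omega

end Independence

section FinitePartitions

lemma IsFinitePartition.exists_mem {π : Set (Set X)} (hπ : IsFinitePartition π) (x : X) :
    ∃ A ∈ π, x ∈ A := by
  obtain ⟨A, hA, hxA⟩ : x ∈ ⋃₀ π := hπ.2.2.2 ▸ mem_univ x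
  exact ⟨A, hA, hxA⟩

lemma IsFinitePartition.inter {π₁ π₂ : Set (Set X)} (h₁ : IsFinitePartition π₁)
    (h₂ : IsFinitePartition π₂) : IsFinitePartition (image2 (· ∩ ·) π₁ π₂) := by
  obtain ⟨hfin₁, hmeas₁, hdisj₁, -⟩ := id h₁
  obtain ⟨hfin₂, hmeas₂, hdisj₂, -⟩ := id h₂
  refine ⟨hfin₁.image2 _ hfin₂, ?_, ?_, ?_⟩
  · rintro _ ⟨A, hA, B, hB, rfl⟩
    exact (hmeas₁ A hA).inter (hmeas₂ B hB)
  · rintro _ ⟨A, hA, B, hB, rfl⟩ _ ⟨A', hA', B', hB', rfl⟩ hne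
    by_cases hAA' : A = A'
    · subst hAA'
      have hBB' : B ≠ B' := by rintro rfl; exact hne rfl
      exact (hdisj₂ B hB B' hB' hBB').mono inter_subset_right inter_subset_right
    · exact (hdisj₁ A hA A' hA' hAA').mono inter_subset_left inter_subset_left
  · refine eq_univ_of_forall fun x => ?_
    obtain ⟨A, hA, hxA⟩ := h₁.exists_mem x
    obtain ⟨B, hB, hxB⟩ := h₂.exists_mem x
    exact ⟨A ∩ B, mem_image2_of_mem hA hB, hxA, hxB⟩

lemma exists_isFinitePartition_refines {ι : Type*} (s : Finset ι) (π : ι → Set (Set X))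
    (hπ : ∀ i ∈ s, IsFinitePartition (π i)) :
    ∃ π', IsFinitePartition π' ∧ ∀ i ∈ s, ∀ A ∈ π', ∃ B ∈ π i, A ⊆ B := by
  classical
  induction s using Finset.induction_on with
  | empty =>
    refine ⟨{univ}, ⟨finite_singleton _, by simp, ?_, sUnion_singleton _⟩, by simp⟩
    rintro A rfl B rfl hAB
    exact absurd rfl hAB
  | insert i s hi ih =>
    obtain ⟨π', hπ', hrefine⟩ := ih fun j hj => hπ j (Finset.mem_insert_of_mem hj)
    refine ⟨image2 (· ∩ ·) (π i) π', (hπ i (Finset.mem_insert_self i s)).inter hπ', ?_⟩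
    rintro j hj _ ⟨A, hA, B, hB, rfl⟩
    rcases Finset.mem_insert.1 hj with rfl | hj
    · exact ⟨A, hA, inter_subset_left⟩
    · obtain ⟨C, hC, hBC⟩ := hrefine j hj B hB
      exact ⟨C, hC, inter_subset_right.trans hBC⟩

lemma ae_of_forall_measure_inter_eq_zero {π : Set (Set X)} (hπ : π.Countable)
    (hcover : ⋃₀ π = univ) {p : X → Prop} (h : ∀ A ∈ π, μ (A ∩ {x | ¬ p x}) = 0) :
    ∀ᵐ x ∂μ, p x := by
  refine ae_iff.2 (measure_mono_null (fun x hx => ?_) ((measure_biUnion_null_iff hπ).2 h))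
  obtain ⟨A, hA, hxA⟩ : x ∈ ⋃₀ π := hcover ▸ mem_univ x
  exact mem_biUnion hA ⟨hxA, hx⟩

lemma measurable_partitionStep {P : Finset (Set X)} (hP : ∀ A ∈ P, MeasurableSet A)
    (v : Set X → ℝ) : Measurable (partitionStep P v) :=
  Finset.measurable_sum _ fun A hA => measurable_const.indicator (hP A hA)

end FinitePartitions

section GridBrackets

variable (μ) (a δ : ℝ)

noncomputable def upperIndex (f : X → ℝ) (A : Set X) : ℕ :=
  sInf {j : ℕ | μ (A ∩ {x | a + j * δ < f x}) = 0}

noncomputable def cellUpper (f : X → ℝ) (A : Set X) : ℝ :=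
  a + upperIndex μ a δ f A * δ

/-- For `upperIndex = 0` both branches equal `a`, since `0 - 1 = 0` in `ℕ`. -/
noncomputable def cellLower (f : X → ℝ) (A : Set X) : ℝ :=
  if μ (A ∩ {x | f x ≤ a + (upperIndex μ a δ f A - 1 : ℕ) * δ}) = 0 then
    a + (upperIndex μ a δ f A - 1 : ℕ) * δ
  else a

variable {μ a δ} {T : ℕ} {f : X → ℝ} {A : Set X}

lemma upperIndex_spec (hfT : ∀ x, f x ≤ a + T * δ) :
    μ (A ∩ {x | a + upperIndex μ a δ f A * δ < f x}) = 0 ∧ upperIndex μ a δ f A ≤ T := by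
  have hT : T ∈ {j : ℕ | μ (A ∩ {x | a + j * δ < f x}) = 0} := by
    simp [fun x => (hfT x).not_gt]
  exact ⟨Nat.sInf_mem ⟨T, hT⟩, Nat.sInf_le hT⟩

lemma measure_inter_lt_ne_zero_of_lt_upperIndex {j : ℕ} (hj : j < upperIndex μ a δ f A) :
    μ (A ∩ {x | a + j * δ < f x}) ≠ 0 :=
  Nat.notMem_of_lt_sInf hj

lemma measure_inter_cellUpper_lt (hfT : ∀ x, f x ≤ a + T * δ) :
    μ (A ∩ {x | cellUpper μ a δ f A < f x}) = 0 :=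
  (upperIndex_spec hfT).1

lemma measure_inter_lt_cellLower (hfa : ∀ x, a ≤ f x) :
    μ (A ∩ {x | f x < cellLower μ a δ f A}) = 0 := by
  unfold cellLower
  split_ifs with h
  · exact measure_mono_null
      (inter_subset_inter_right _ (ofPred_subset_ofPred.2 fun x hx => hx.le)) h
  · simp [fun x => (hfa x).not_gt]

lemma le_cellLower (hδ : 0 ≤ δ) : a ≤ cellLower μ a δ f A := by
  unfold cellLower
  split_ifs
  exacts [le_add_of_nonneg_right (by positivity), le_rfl]

lemma cellLower_le_cellUpper (hδ : 0 ≤ δ) : cellLower μ a δ f A ≤ cellUpper μ a δ f A := by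
  unfold cellLower cellUpper
  split_ifs
  · gcongr
    exact_mod_cast Nat.sub_le _ 1
  · exact le_add_of_nonneg_right (by positivity)

lemma cellUpper_le (hfT : ∀ x, f x ≤ a + T * δ) (hδ : 0 ≤ δ) :
    cellUpper μ a δ f A ≤ a + T * δ := by
  unfold cellUpper
  gcongr
  exact_mod_cast (upperIndex_spec hfT).2

lemma cellUpper_sub_cellLower_le (hfT : ∀ x, f x ≤ a + T * δ) (hδ : 0 ≤ δ) :
    cellUpper μ a δ f A - cellLower μ a δ f A ≤ δ ∨ ∃ j < T, Splits μ {x | f x ≤ a + j * δ} A := by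
  obtain ⟨-, huT⟩ := upperIndex_spec (μ := μ) (A := A) hfT
  have hsplit := fun j : ℕ =>
    measure_inter_lt_ne_zero_of_lt_upperIndex (μ := μ) (a := a) (δ := δ) (f := f) (A := A) (j := j)
  unfold cellLower cellUpper
  set u := upperIndex μ a δ f A
  split_ifs with h
  · left
    have : (u : ℝ) ≤ (u - 1 : ℕ) + 1 := by exact_mod_cast (by omega : u ≤ u - 1 + 1)
    nlinarith
  · rcases Nat.eq_zero_or_pos u with hu0 | hupos
    · left
      simpa [hu0] using hδ
    · refine Or.inr ⟨u - 1, by omega, pos_iff_ne_zero.2 h, pos_iff_ne_zero.2 ?_⟩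
      rw [show A \ {x | f x ≤ a + (u - 1 : ℕ) * δ} = A ∩ {x | a + (u - 1 : ℕ) * δ < f x} by
        ext x; simp [not_le]]
      exact hsplit _ (by omega)

lemma cellUpper_mem_grid (hfT : ∀ x, f x ≤ a + T * δ) :
    cellUpper μ a δ f A ∈ (fun j : ℕ => a + j * δ) '' Iic T :=
  ⟨_, (upperIndex_spec hfT).2, rfl⟩

lemma cellLower_mem_grid (hfT : ∀ x, f x ≤ a + T * δ) :
    cellLower μ a δ f A ∈ (fun j : ℕ => a + j * δ) '' Iic T := by
  unfold cellLower
  split_ifs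
  · exact ⟨_, (Nat.sub_le _ 1).trans (upperIndex_spec hfT).2, rfl⟩
  · exact ⟨0, Nat.zero_le _, by simp⟩

end GridBrackets

section Bracketing

def IsBracket (μ : Measure X) (ε : ℝ) (p : (X → ℝ) × (X → ℝ)) : Prop :=
  Measurable p.1 ∧ Measurable p.2 ∧ p.1 ≤ p.2 ∧
    ∫⁻ x, ENNReal.ofReal (p.2 x - p.1 x) ∂μ ≤ ENNReal.ofReal ε

noncomputable def gridBracket (μ : Measure X) (P : Finset (Set X)) (a δ : ℝ) (f : X → ℝ) :
    (X → ℝ) × (X → ℝ) :=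
  (partitionStep P (cellLower μ a δ f), partitionStep P (cellUpper μ a δ f))

section GridBracket

variable {P : Finset (Set X)} (hP : IsFinitePartition (P : Set (Set X))) {a δ : ℝ} {T : ℕ}
  {f : X → ℝ}
include hP

lemma gridBracket_apply {A : Set X} (hA : A ∈ P) {x : X} (hx : x ∈ A) :
    (gridBracket μ P a δ f).1 x = cellLower μ a δ f A ∧
      (gridBracket μ P a δ f).2 x = cellUpper μ a δ f A :=
  ⟨partitionStep_eq hP.2.2.1 _ hA hx, partitionStep_eq hP.2.2.1 _ hA hx⟩

lemma gridBracket_fst_le_snd (hδ : 0 ≤ δ) : (gridBracket μ P a δ f).1 ≤ (gridBracket μ P a δ f).2 :=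
  fun x => by
    obtain ⟨A, hA, hxA⟩ := hP.exists_mem x
    rw [(gridBracket_apply hP hA hxA).1, (gridBracket_apply hP hA hxA).2]
    exact cellLower_le_cellUpper hδ

lemma gridBracket_ae (hfa : ∀ x, a ≤ f x) (hfT : ∀ x, f x ≤ a + T * δ) :
    (gridBracket μ P a δ f).1 ≤ᵐ[μ] f ∧ f ≤ᵐ[μ] (gridBracket μ P a δ f).2 := by
  constructor
  · refine ae_of_forall_measure_inter_eq_zero P.countable_toSet hP.2.2.2 fun A hA =>
      measure_mono_null ?_ (measure_inter_lt_cellLower (δ := δ) (A := A) hfa)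
    rintro x ⟨hxA, hx⟩
    exact ⟨hxA, by simpa [(gridBracket_apply hP hA hxA).1] using hx⟩
  · refine ae_of_forall_measure_inter_eq_zero P.countable_toSet hP.2.2.2 fun A hA =>
      measure_mono_null ?_ (measure_inter_cellUpper_lt (A := A) hfT)
    rintro x ⟨hxA, hx⟩
    exact ⟨hxA, by simpa [(gridBracket_apply hP hA hxA).2] using hx⟩

lemma lintegral_gridBracket_le (hfT : ∀ x, f x ≤ a + T * δ) (hδ : 0 ≤ δ) :
    ∫⁻ x, ENNReal.ofReal ((gridBracket μ P a δ f).2 x - (gridBracket μ P a δ f).1 x) ∂μ ≤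
      ENNReal.ofReal δ * μ univ + ENNReal.ofReal (T * δ) *
        ∑ j ∈ Finset.range T, μ (piBoundary μ P {x | f x ≤ a + j * δ}) := by
  set E := ⋃ j ∈ Finset.range T, piBoundary μ P {x | f x ≤ a + j * δ}
  have hpoint : ∀ x, ENNReal.ofReal ((gridBracket μ P a δ f).2 x - (gridBracket μ P a δ f).1 x)
      ≤ ENNReal.ofReal δ + E.indicator (fun _ => ENNReal.ofReal (T * δ)) x := by
    intro x
    obtain ⟨A, hA, hxA⟩ := hP.exists_mem x
    rw [(gridBracket_apply hP hA hxA).1, (gridBracket_apply hP hA hxA).2]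
    rcases cellUpper_sub_cellLower_le (μ := μ) (A := A) hfT hδ with hsmall | ⟨j, hj, hsplit⟩
    · exact (ENNReal.ofReal_le_ofReal hsmall).trans le_self_add
    · rw [indicator_of_mem (mem_iUnion₂.2 ⟨j, Finset.mem_range.2 hj,
        subset_piBoundary (Finset.mem_coe.2 hA) hsplit hxA⟩)]
      refine (ENNReal.ofReal_le_ofReal ?_).trans le_add_self
      linarith [cellUpper_le (μ := μ) (A := A) hfT hδ,
        le_cellLower (μ := μ) (a := a) (f := f) (A := A) hδ]
  calc _ ≤ ∫⁻ x, ENNReal.ofReal δ + E.indicator (fun _ => ENNReal.ofReal (T * δ)) x ∂μ :=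
        lintegral_mono hpoint
    _ = ENNReal.ofReal δ * μ univ + ∫⁻ x, E.indicator (fun _ => ENNReal.ofReal (T * δ)) x ∂μ := by
        rw [lintegral_add_left measurable_const, lintegral_const]
    _ ≤ _ := by
        gcongr
        exact (lintegral_indicator_const_le _ _).trans
          (by gcongr; exact measure_biUnion_finset_le _ _)

lemma isBracket_gridBracket [IsProbabilityMeasure μ] (hfT : ∀ x, f x ≤ a + T * δ) (hδ : 0 ≤ δ)
    (hboundary : ∀ j ∈ Finset.range T,
      μ (piBoundary μ P {x | f x ≤ a + j * δ}) ≤ ((T : ℝ≥0∞) * T)⁻¹) :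
    IsBracket μ (2 * δ) (gridBracket μ P a δ f) := by
  refine ⟨measurable_partitionStep (fun A hA => hP.2.1 A hA) _,
    measurable_partitionStep (fun A hA => hP.2.1 A hA) _, gridBracket_fst_le_snd hP hδ, ?_⟩
  calc _ ≤ ENNReal.ofReal δ * μ univ + ENNReal.ofReal (T * δ) *
        ∑ j ∈ Finset.range T, μ (piBoundary μ P {x | f x ≤ a + j * δ}) :=
        lintegral_gridBracket_le hP hfT hδ
    _ ≤ ENNReal.ofReal δ * 1 + ENNReal.ofReal (T * δ) * (T * ((T : ℝ≥0∞) * T)⁻¹) := by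
        rw [measure_univ]
        gcongr
        simpa using Finset.sum_le_card_nsmul _ _ _ hboundary
    _ ≤ ENNReal.ofReal δ + ENNReal.ofReal δ := by
        rw [ENNReal.ofReal_mul (Nat.cast_nonneg _), ENNReal.ofReal_natCast, mul_one,
          mul_comm (T : ℝ≥0∞), mul_assoc, ← mul_assoc (T : ℝ≥0∞)]
        gcongr
        exact mul_le_of_le_one_right' (ENNReal.mul_inv_le_one _)
    _ = ENNReal.ofReal (2 * δ) := by rw [← ENNReal.ofReal_add hδ hδ, two_mul]

end GridBracket

variable {ℱ : Set (X → ℝ)}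

theorem exists_finite_ae_brackets [IsProbabilityMeasure μ] {M : ℝ}
    (hbdd : ∀ f ∈ ℱ, ∀ x, |f x| ≤ M)
    (happrox : ∀ α : ℝ, FinitelyApproximable μ ((fun f => {x | f x ≤ α}) '' ℱ))
    {ε : ℝ} (hε : 0 < ε) :
    ∃ B : Set ((X → ℝ) × (X → ℝ)), B.Finite ∧ (∀ p ∈ B, IsBracket μ ε p) ∧
      ∀ f ∈ ℱ, ∃ p ∈ B, p.1 ≤ᵐ[μ] f ∧ f ≤ᵐ[μ] p.2 := by
  set δ := ε / 2
  have hδ : 0 < δ := half_pos hε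
  set T := ⌈2 * M / δ⌉₊
  have hfa : ∀ f ∈ ℱ, ∀ x, -M ≤ f x := fun f hf x => (abs_le.1 (hbdd f hf x)).1
  have hfT : ∀ f ∈ ℱ, ∀ x, f x ≤ -M + T * δ := fun f hf x => by
    have : 2 * M ≤ T * δ := (div_le_iff₀ hδ).1 (Nat.le_ceil _)
    linarith [(abs_le.1 (hbdd f hf x)).2]
  choose π hπ hπη using fun j : ℕ =>
    happrox (-M + j * δ) ((T : ℝ≥0∞) * T)⁻¹ (ENNReal.inv_pos.2 (by finiteness))
  obtain ⟨π', hπ', hrefine⟩ := exists_isFinitePartition_refines (Finset.range T) π fun j _ => hπ j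
  set P := hπ'.1.toFinset
  have hP : IsFinitePartition (P : Set (Set X)) := by simpa [P] using hπ'
  have hgrid : ((fun j : ℕ => -M + j * δ) '' Iic T).Finite := (finite_Iic T).image _
  refine ⟨gridBracket μ P (-M) δ '' ℱ, ?_, ?_, fun f hf =>
    ⟨_, mem_image_of_mem _ hf, gridBracket_ae hP (hfa f hf) (hfT f hf)⟩⟩
  · refine ((finite_image_partitionStep P hgrid).prod
      (finite_image_partitionStep P hgrid)).subset ?_
    rintro _ ⟨f, hf, rfl⟩
    exact ⟨⟨_, fun A _ => cellLower_mem_grid (hfT f hf), rfl⟩,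
      ⟨_, fun A _ => cellUpper_mem_grid (hfT f hf), rfl⟩⟩
  rintro _ ⟨f, hf, rfl⟩
  refine (show 2 * δ = ε by ring) ▸ isBracket_gridBracket hP (hfT f hf) hδ.le fun j hj => ?_
  exact (measure_mono (piBoundary_mono_of_refines (by simpa [P] using hrefine j hj) _)).trans
    (hπη j _ ⟨f, hf, rfl⟩)

lemma IsBracket.piecewise {ε : ℝ} {p : (X → ℝ) × (X → ℝ)} (hp : IsBracket μ ε p) {N : Set X}
    [DecidablePred (· ∈ N)] (hN : MeasurableSet N) (hN0 : μ N = 0) {c : ℝ} (hc : 0 ≤ c) :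
    IsBracket μ ε (N.piecewise (fun _ => -c) p.1, N.piecewise (fun _ => c) p.2) := by
  obtain ⟨hm₁, hm₂, hle, hint⟩ := hp
  refine ⟨.piecewise hN measurable_const hm₁, .piecewise hN measurable_const hm₂, fun x => ?_, ?_⟩
  · by_cases hx : x ∈ N <;> simp [hx, hle x, hc]
  · refine le_of_eq_of_le (lintegral_congr_ae ?_) hint
    filter_upwards [measure_eq_zero_iff_ae_notMem.1 hN0] with x hx
    simp [hx]

/-- The brackets are redefined as `∓|M|` on one null set containing all exceptional sets. -/
lemma exists_finite_brackets_of_ae {ℱ₀ : Set (X → ℝ)} (hcount : ℱ₀.Countable) {M : ℝ}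
    (hbdd : ∀ f ∈ ℱ₀, ∀ x, |f x| ≤ M) {ε : ℝ} {B : Set ((X → ℝ) × (X → ℝ))} (hB : B.Finite)
    (hbr : ∀ p ∈ B, IsBracket μ ε p) (hae : ∀ f ∈ ℱ₀, ∃ p ∈ B, p.1 ≤ᵐ[μ] f ∧ f ≤ᵐ[μ] p.2) :
    ∃ B' : Set ((X → ℝ) × (X → ℝ)), B'.Finite ∧ (∀ p ∈ B', IsBracket μ ε p) ∧
      ℱ₀ ⊆ ⋃ p ∈ B', Icc p.1 p.2 := by
  classical
  set N := toMeasurable μ (⋃ f ∈ ℱ₀, ⋃ p ∈ {p ∈ B | p.1 ≤ᵐ[μ] f ∧ f ≤ᵐ[μ] p.2},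
    {x | ¬ (p.1 x ≤ f x ∧ f x ≤ p.2 x)})
  have hN : μ N = 0 := by
    rw [measure_toMeasurable, measure_biUnion_null_iff hcount]
    intro f _
    rw [measure_biUnion_null_iff (hB.subset (sep_subset _ _)).countable]
    rintro p ⟨-, hlow, hup⟩
    exact ae_iff.1 (hlow.and hup)
  let patch (p : (X → ℝ) × (X → ℝ)) : (X → ℝ) × (X → ℝ) :=
    (N.piecewise (fun _ => -|M|) p.1, N.piecewise (fun _ => |M|) p.2)
  refine ⟨patch '' B, hB.image patch, ?_, fun f hf => ?_⟩
  · rintro _ ⟨p, hp, rfl⟩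
    exact (hbr p hp).piecewise (measurableSet_toMeasurable μ _) hN (abs_nonneg M)
  obtain ⟨p, hp, hlow, hup⟩ := hae f hf
  have hbound x : -|M| ≤ f x ∧ f x ≤ |M| := abs_le.1 ((hbdd f hf x).trans (le_abs_self M))
  have hgood x (hx : x ∉ N) : p.1 x ≤ f x ∧ f x ≤ p.2 x := by
    by_contra h
    exact hx (subset_toMeasurable _ _ (mem_biUnion hf (mem_biUnion ⟨hp, hlow, hup⟩ h)))
  refine mem_iUnion₂.2 ⟨patch p, mem_image_of_mem _ hp, fun x => ?_, fun x => ?_⟩ <;>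
    by_cases hx : x ∈ N
  · simpa [patch, hx] using (hbound x).1
  · simpa [patch, hx] using (hgood x hx).1
  · simpa [patch, hx] using (hbound x).2
  · simpa [patch, hx] using (hgood x hx).2

lemma finiteBracketing_of_forall_exists_finite
    (h : ∀ ε > 0, ∃ B : Set ((X → ℝ) × (X → ℝ)), B.Finite ∧ (∀ p ∈ B, IsBracket μ ε p) ∧
      ℱ ⊆ ⋃ p ∈ B, Icc p.1 p.2) :
    FiniteBracketing μ ℱ := by
  intro ε hε
  obtain ⟨B, hB, hbr, hcover⟩ := h ε hε
  have := hB.to_subtype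
  obtain ⟨n, ⟨e⟩⟩ := Finite.exists_equiv_fin B
  refine ⟨n, fun i => (e.symm i).1.1, fun i => (e.symm i).1.2, fun i => ?_, fun f hf => ?_⟩
  · obtain ⟨hm₁, hm₂, hle, hint⟩ := hbr _ (e.symm i).2
    exact ⟨hm₁, hm₂, hle, hint⟩
  · obtain ⟨p, hp, hfp⟩ := mem_iUnion₂.1 (hcover hf)
    refine ⟨e ⟨p, hp⟩, fun x => ?_⟩
    simpa using And.intro (hfp.1 x) (hfp.2 x)

end Bracketing

end Measure

/-- **Bounded VC major case.** If `ℱ` is a separable family of measurable functions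
uniformly bounded by `M`, and each level-set family `𝒞_α` has finite VC dimension, then
`ℱ` has finite bracketing numbers with respect to every probability measure. -/
theorem bounded_vc_major_finite_bracketing {X : Type*} [MeasurableSpace X]
    (ℱ : Set (X → ℝ)) (hmeas : ∀ f ∈ ℱ, Measurable f) (hsep : SeparableFamily ℱ)
    (M : ℝ) (hbdd : ∀ f ∈ ℱ, ∀ x, |f x| ≤ M)
    (hlevel : ∀ α : ℝ, FiniteVC ((fun f => {x | f x ≤ α}) '' ℱ)) :
    ∀ μ : Measure X, IsProbabilityMeasure μ → FiniteBracketing μ ℱ := by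
  intro μ _
  have happrox (α : ℝ) : FinitelyApproximable μ ((fun f => {x | f x ≤ α}) '' ℱ) :=
    (hlevel α).finitelyApproximable <| by
      rintro _ ⟨f, hf, rfl⟩
      exact measurableSet_le (hmeas f hf) measurable_const
  obtain ⟨ℱ₀, hℱ₀, hcount, hdense⟩ := hsep
  refine finiteBracketing_of_forall_exists_finite fun ε hε => ?_
  obtain ⟨B, hB, hbr, hae⟩ := exists_finite_ae_brackets hbdd happrox hε
  obtain ⟨B', hB', hbr', hcover⟩ := exists_finite_brackets_of_ae hcount
    (fun f hf => hbdd f (hℱ₀ hf)) hB hbr fun f hf => hae f (hℱ₀ hf)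
  exact ⟨B', hB', hbr',
    subset_of_isClosed_of_tendsto (hB'.isClosed_biUnion fun _ _ => isClosed_Icc) hcover hdense⟩
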